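/- If a ν-Schröder path σ is obtained from π by a single contraction, then area(σ) equals either area(π) + 1/2 (for a right contraction) or is strictly less than area(π) (left and diagonal contractions decrease area); in particular twice the area changes by an integer or half-integer amount, and along any sequence of matched/contraction moves in the Morse matching argument the area is conserved only if every contraction is a right contraction. -/

import Mathlib

/-- Steps of a (Schröder) lattice path: north, east, diagonal. -/
inductive Step : Type
  | N | E | D
deriving DecidableEq, Repr

/-- Total horizontal displacement of a path. -/
def eLen (p : List Step) : ℕ := p.count Step.E + p.count Step.D

/-- Total vertical displacement of a path. -/
def nLen (p : List Step) : ℕ := p.count Step.N + p.count Step.D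

/-- A lattice path uses only `N` and `E` steps. -/
def IsLatticePath (ν : List Step) : Prop := Step.D ∉ ν

/-- `colVal p x` is twice the starting height of the step of `p` crossing the vertical
strip between abscissas `x` and `x+1`, plus `1` if that step is diagonal.  Comparing these
values columnwise is equivalent to comparing the heights of the paths over each strip. -/
def colVal : List Step → ℕ → ℕ
  | [], _ => 0
  | Step.N :: p, x => colVal p x + 2
  | Step.E :: _, 0 => 0
  | Step.E :: p, x+1 => colVal p x
  | Step.D :: _, 0 => 1
  | Step.D :: p, x+1 => colVal p x + 2

/-- `π` stays weakly above `ρ` (same endpoints intended). -/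
def WeaklyAbove (π ρ : List Step) : Prop := ∀ x, colVal ρ x ≤ colVal π x

/-- Replace every peak (consecutive `NE`) of a path by a diagonal step; applied to `ν`
this gives the path `μ` of the large ν-Schröder path definition. -/
def cutPeaks : List Step → List Step
  | [] => []
  | Step.N :: Step.E :: p => Step.D :: cutPeaks p
  | s :: p => s :: cutPeaks p

/-- A ν-Dyck path: an `N,E` path with the same endpoints as `ν` staying weakly above `ν`. -/
def IsNuDyck (ν π : List Step) : Prop :=
  Step.D ∉ π ∧ eLen π = eLen ν ∧ nLen π = nLen ν ∧ WeaklyAbove π ν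

/-- A (small) ν-Schröder path: an `N,E,D` path with the same endpoints as `ν` staying weakly
above `ν` (this automatically forbids diagonal steps on the ν-diagonal). -/
def IsSmallSchroder (ν π : List Step) : Prop :=
  eLen π = eLen ν ∧ nLen π = nLen ν ∧ WeaklyAbove π ν

/-- A large ν-Schröder path: an `N,E,D` path with the same endpoints as `ν` staying weakly
above the path obtained from `ν` by replacing each peak by a diagonal step. -/
def IsLargeSchroder (ν π : List Step) : Prop :=
  eLen π = eLen ν ∧ nLen π = nLen ν ∧ WeaklyAbove π (cutPeaks ν)

/-- Number of peaks (consecutive `NE` pairs). -/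
def peaks (p : List Step) : ℕ := (p.zip p.tail).count (Step.N, Step.E)

/-- Number of valleys (consecutive `EN` pairs). -/
def valleys (p : List Step) : ℕ := (p.zip p.tail).count (Step.E, Step.N)

/-- Lattice points at which valleys of a path occur (starting the path at `(x,y)`). -/
def valleyPts : List Step → ℕ → ℕ → List (ℕ × ℕ)
  | [], _, _ => []
  | Step.E :: p, x, y =>
      (if p.head? = some Step.N then [(x+1, y)] else []) ++ valleyPts p (x+1) y
  | Step.N :: p, x, y => valleyPts p x (y+1)
  | Step.D :: p, x, y => valleyPts p (x+1) (y+1)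

/-- Lattice points at which high peaks (peaks strictly above `ν`) of a path occur. -/
def highPeakPts (ν : List Step) : List Step → ℕ → ℕ → List (ℕ × ℕ)
  | [], _, _ => []
  | Step.N :: p, x, y =>
      (if p.head? = some Step.E ∧ colVal ν x < 2*(y+1) then [(x, y+1)] else []) ++
        highPeakPts ν p x (y+1)
  | Step.E :: p, x, y => highPeakPts ν p (x+1) y
  | Step.D :: p, x, y => highPeakPts ν p (x+1) (y+1)

/-- Number of high peaks of `π` relative to `ν`. -/
def highPeaks (ν π : List Step) : ℕ := (highPeakPts ν π 0 0).length

/-- j-th ν-Narayana number: number of ν-Dyck paths with exactly `j` valleys. -/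
noncomputable def Nar (ν : List Step) (j : ℕ) : ℕ :=
  Nat.card {π : List Step // IsNuDyck ν π ∧ valleys π = j}

/-- Number of small ν-Schröder paths with exactly `i` diagonal steps. -/
noncomputable def schNum (ν : List Step) (i : ℕ) : ℕ :=
  Nat.card {π : List Step // IsSmallSchroder ν π ∧ π.count Step.D = i}

/-- `lowH ν x` is the lowest height of a point of `ν` at abscissa `x`. -/
def lowH : List Step → ℕ → ℕ
  | _, 0 => 0
  | [], _+1 => 0
  | Step.N :: p, x+1 => lowH p (x+1) + 1
  | Step.E :: p, x+1 => lowH p x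
  | Step.D :: p, x+1 => lowH p x + 1

/-- The lowest lattice path from `(0,0)` to `(b,a)` weakly above the line segment
from `(0,0)` to `(b,a)`. -/
def nuAB (a b : ℕ) : List Step :=
  (List.range b).flatMap (fun x =>
    List.replicate (((x+1)*a + b - 1)/b - (x*a + b - 1)/b) Step.N ++ [Step.E])

/-- Number of large rational `(a,b)`-Schröder paths with `i` diagonal steps. -/
noncomputable def largeCount (a b i : ℕ) : ℕ :=
  Nat.card {π : List Step // IsLargeSchroder (nuAB a b) π ∧ π.count Step.D = i}

/-- Number of small rational `(a,b)`-Schröder paths with `i` diagonal steps. -/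
noncomputable def smallCount (a b i : ℕ) : ℕ :=
  Nat.card {π : List Step // IsSmallSchroder (nuAB a b) π ∧ π.count Step.D = i}

/-- Binomial coefficient with an integer lower entry (zero when negative). -/
def chooseZ (n : ℕ) (k : ℤ) : ℕ := if 0 ≤ k then n.choose k.toNat else 0

/-- The region weakly above `ν` in the rectangle `[0,b] × [0,a]`. -/
def InRegion (ν : List Step) (p : ℕ × ℕ) : Prop :=
  p.1 ≤ eLen ν ∧ p.2 ≤ nLen ν ∧ lowH ν p.1 ≤ p.2

/-- Two points of the region are ν-incompatible if one is strictly southwest of the other and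
the rectangle they span lies in the region (equivalently its bottom-right corner does). -/
def Incompat (ν : List Step) (p q : ℕ × ℕ) : Prop :=
  ((p.1 < q.1 ∧ p.2 < q.2) ∨ (q.1 < p.1 ∧ q.2 < p.2)) ∧
    InRegion ν (max p.1 q.1, min p.2 q.2)

/-- A ν-binary tree: a maximal set of pairwise ν-compatible points of the region. -/
def IsBinaryTree (ν : List Step) (T : Finset (ℕ × ℕ)) : Prop :=
  (∀ p ∈ T, InRegion ν p) ∧ (∀ p ∈ T, ∀ q ∈ T, ¬ Incompat ν p q) ∧
    ∀ r, InRegion ν r → (∀ p ∈ T, ¬ Incompat ν r p) → r ∈ T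

/-- A ν-Schröder tree: pairwise ν-compatible points of the region containing the root
`(0,a)` and meeting every row and every column. -/
def IsSchroderTree (ν : List Step) (T : Finset (ℕ × ℕ)) : Prop :=
  (∀ p ∈ T, InRegion ν p) ∧ (∀ p ∈ T, ∀ q ∈ T, ¬ Incompat ν p q) ∧
    (0, nLen ν) ∈ T ∧ (∀ y ≤ nLen ν, ∃ p ∈ T, p.2 = y) ∧ (∀ x ≤ eLen ν, ∃ p ∈ T, p.1 = x)

/-- One contraction step: delete a node, provided the result is still a ν-Schröder tree. -/
def ContractStep (ν : List Step) (T T' : Finset (ℕ × ℕ)) : Prop :=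
  ∃ q ∈ T, T' = T.erase q ∧ IsSchroderTree ν T'

/-- `p` is a leaf of the (plane tree associated to the) node set `T`: no node strictly below
it in its column and none strictly to its right in its row. -/
def IsLeafIn (T : Finset (ℕ × ℕ)) (p : ℕ × ℕ) : Prop :=
  (∀ q ∈ T, ¬(q.1 = p.1 ∧ q.2 < p.2)) ∧ (∀ q ∈ T, ¬(q.2 = p.2 ∧ p.1 < q.1))

/-- Starting points of vertical runs and ending points of horizontal runs of `ν`. -/
def leafPts (ν : List Step) : Finset (ℕ × ℕ) :=
  (valleyPts ν 0 0).toFinset ∪ (if ν.head? = some Step.N then {((0 : ℕ), (0 : ℕ))} else ∅) ∪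
    (if ν.getLast? = some Step.E then {(eLen ν, nLen ν)} else ∅)

/-- `horizNu ν x y`: maximal number of east steps that can be placed starting at `(x,y)`
before crossing `ν` (staying within the bounding rectangle). -/
def horizNu (ν : List Step) (x y : ℕ) : ℕ :=
  ((Finset.Icc 1 (eLen ν - x)).filter (fun k => lowH ν (x + k) ≤ y)).card

/-- No `N` step of the given path (started at `(x,y)`) has initial point with
`horizNu`-value `h`. -/
def noNAt (ν : List Step) (h : ℕ) : List Step → ℕ → ℕ → Prop
  | [], _, _ => True
  | Step.N :: p, x, y => horizNu ν x y ≠ h ∧ noNAt ν h p x (y+1)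
  | Step.E :: p, x, y => noNAt ν h p (x+1) y
  | Step.D :: p, x, y => noNAt ν h p (x+1) (y+1)

/-- Right contraction: replace a consecutive `EN` pair (a valley) by a `D` step. -/
def RightC (μ lam : List Step) : Prop :=
  ∃ p q, μ = p ++ Step.E :: Step.N :: q ∧ lam = p ++ Step.D :: q

/-- Left contraction: delete an `E` step together with the most recent preceding `N` step
whose initial point has the same `horizNu` statistic as the initial point of the `E` step,
shift the intermediate subpath, and place a `D` step at the initial point of the `N` step. -/
def LeftC (ν μ lam : List Step) : Prop :=
  ∃ p m q, μ = p ++ Step.N :: (m ++ Step.E :: q) ∧ lam = p ++ Step.D :: (m ++ q) ∧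
    horizNu ν (eLen p) (nLen p)
      = horizNu ν (eLen (p ++ Step.N :: m)) (nLen (p ++ Step.N :: m)) ∧
    noNAt ν (horizNu ν (eLen (p ++ Step.N :: m)) (nLen (p ++ Step.N :: m)))
      m (eLen p) (nLen p + 1)

/-- Diagonal contraction: delete an `E` step ending at the initial point `r` of a `D` step,
together with the most recent preceding `N` step whose initial point `s` satisfies
`horizNu s = horizNu r`, shift the intermediate subpath, and place a `D` step at `s`. -/
def DiagC (ν μ lam : List Step) : Prop :=
  ∃ p m q, μ = p ++ Step.N :: (m ++ Step.E :: Step.D :: q) ∧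
    lam = p ++ Step.D :: (m ++ Step.D :: q) ∧
    horizNu ν (eLen p) (nLen p)
      = horizNu ν (eLen (p ++ Step.N :: m) + 1) (nLen (p ++ Step.N :: m)) ∧
    noNAt ν (horizNu ν (eLen (p ++ Step.N :: m) + 1) (nLen (p ++ Step.N :: m)))
      m (eLen p) (nLen p + 1)

/-- Cover relation of the contraction poset of ν-Schröder paths. -/
def Covers (ν μ lam : List Step) : Prop :=
  IsSmallSchroder ν μ ∧ IsSmallSchroder ν lam ∧
    (RightC μ lam ∨ LeftC ν μ lam ∨ DiagC ν μ lam)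

/-- The Morse matching: `σ` (having a `D` step preceded by no valley) is matched with the
path `π` obtained by replacing the first such `D` step by `EN`. -/
def MorseM (ν : List Step) : Set (List Step × List Step) :=
  { z | ∃ p q, Step.D ∉ p ∧ valleys p = 0 ∧
      z.2 = p ++ Step.D :: q ∧ z.1 = p ++ Step.E :: Step.N :: q ∧ IsSmallSchroder ν z.2 }

/-- Twice the area between a small ν-Schröder path and `ν`. -/
def area2 (ν π : List Step) : ℕ :=
  ∑ x ∈ Finset.range (eLen ν), (colVal π x - colVal ν x)

/-- An `(I,J̄)`-forest: increasing, non-crossing arcs. -/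
def IsIJForest (I J : Finset ℕ) (F : Finset (ℕ × ℕ)) : Prop :=
  (∀ a ∈ F, a.1 ∈ I ∧ a.2 ∈ J ∧ a.1 < a.2) ∧
    (∀ a ∈ F, ∀ a' ∈ F, ¬(a.1 < a'.1 ∧ a'.1 < a.2 ∧ a.2 < a'.2))

/-- A covering `(I,J̄)`-forest: contains the arc `(1,n)` and has no isolated node. -/
def IsCoveringForest (n : ℕ) (I J : Finset ℕ) (F : Finset (ℕ × ℕ)) : Prop :=
  IsIJForest I J F ∧ (1, n) ∈ F ∧
    (∀ i ∈ I, ∃ a ∈ F, a.1 = i) ∧ (∀ j ∈ J, ∃ a ∈ F, a.2 = j)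

/-- The lattice path read off from the interleaving of `I` and `J̄` (elements `2,…,n-1`,
`E` for elements of `I`, `N` for the others). -/
def nuOf (n : ℕ) (I : Finset ℕ) : List Step :=
  (List.range' 2 (n - 2)).map (fun k => if k ∈ I then Step.E else Step.N)
/-!
`colVal τ x` is twice the area under `τ` in the strip `[x, x + 1]`, so for paths weakly above
`ν` twice the area is the difference of column sums `underArea2 τ - underArea2 ν`. A right
contraction `p E N q ↦ p D q` only changes the column of the valley, adding a half-unit
triangle. A left or diagonal contraction `p N m E t ↦ p D m t` leaves every column of `m` at
its height, only shifted one column right; in effect the column of the `E` step, at height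
`nLen m + 1` above the foot of the `N` step, is traded for a diagonal starting at that foot, so
twice the area drops by `2 · nLen m + 1`.
-/

def underArea2 (τ : List Step) (n : ℕ) : ℕ := ∑ x ∈ Finset.range n, colVal τ x

section PathLengths

variable (p r : List Step)

@[simp] lemma eLen_nil : eLen [] = 0 := rfl
@[simp] lemma nLen_nil : nLen [] = 0 := rfl
@[simp] lemma eLen_cons_N : eLen (Step.N :: p) = eLen p := by simp [eLen]
@[simp] lemma eLen_cons_E : eLen (Step.E :: p) = eLen p + 1 := by simp [eLen, add_right_comm]
@[simp] lemma eLen_cons_D : eLen (Step.D :: p) = eLen p + 1 := by simp [eLen, add_assoc]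
@[simp] lemma nLen_cons_N : nLen (Step.N :: p) = nLen p + 1 := by simp [nLen, add_right_comm]
@[simp] lemma nLen_cons_E : nLen (Step.E :: p) = nLen p := by simp [nLen]
@[simp] lemma nLen_cons_D : nLen (Step.D :: p) = nLen p + 1 := by simp [nLen, add_assoc]
@[simp] lemma eLen_append : eLen (p ++ r) = eLen p + eLen r := by
  simp only [eLen, List.count_append]; omega
@[simp] lemma nLen_append : nLen (p ++ r) = nLen p + nLen r := by
  simp only [nLen, List.count_append]; omega

end PathLengths

section UnderArea

variable (r : List Step) (n : ℕ)

@[simp] lemma underArea2_nil : underArea2 [] n = 0 := by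
  simp [underArea2, colVal]

lemma underArea2_cons_N : underArea2 (Step.N :: r) n = underArea2 r n + 2 * n := by
  simp only [underArea2, colVal, Finset.sum_add_distrib, Finset.sum_const, Finset.card_range,
    smul_eq_mul]
  ring

lemma underArea2_cons_E : underArea2 (Step.E :: r) (n + 1) = underArea2 r n := by
  simp [underArea2, Finset.sum_range_succ', colVal]

lemma underArea2_cons_D :
    underArea2 (Step.D :: r) (n + 1) = underArea2 r n + 2 * n + 1 := by
  simp only [underArea2, Finset.sum_range_succ', colVal, Finset.sum_add_distrib,
    Finset.sum_const, Finset.card_range, smul_eq_mul]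
  ring

lemma underArea2_append (p : List Step) (k : ℕ) :
    underArea2 (p ++ r) (eLen p + k)
      = underArea2 p (eLen p) + 2 * nLen p * k + underArea2 r k := by
  induction p with
  | nil => simp
  | cons s p ih =>
    cases s with
    | N =>
      simp only [List.cons_append, underArea2_cons_N, eLen_cons_N, nLen_cons_N, ih]
      ring
    | E =>
      simp only [List.cons_append, eLen_cons_E, nLen_cons_E,
        show eLen p + 1 + k = eLen p + k + 1 by ring, underArea2_cons_E, ih]
    | D =>
      simp only [List.cons_append, eLen_cons_D, nLen_cons_D,
        show eLen p + 1 + k = eLen p + k + 1 by ring, underArea2_cons_D, ih]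
      ring

end UnderArea

lemma underArea2_rightC (p q : List Step) (k : ℕ) :
    underArea2 (p ++ Step.D :: q) (eLen p + (k + 1))
      = underArea2 (p ++ Step.E :: Step.N :: q) (eLen p + (k + 1)) + 1 := by
  simp only [underArea2_append, underArea2_cons_D, underArea2_cons_E, underArea2_cons_N]
  ring

lemma underArea2_contract (p m t : List Step) (k : ℕ) :
    underArea2 (p ++ Step.D :: (m ++ t)) (eLen p + (eLen m + k + 1)) + (2 * nLen m + 1)
      = underArea2 (p ++ Step.N :: (m ++ Step.E :: t)) (eLen p + (eLen m + k + 1)) := by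
  have hE : underArea2 (m ++ Step.E :: t) (eLen m + k + 1)
      = underArea2 m (eLen m) + 2 * nLen m * (k + 1) + underArea2 t k := by
    rw [add_assoc, underArea2_append, underArea2_cons_E]
  simp only [underArea2_append, underArea2_cons_D, underArea2_cons_N, hE]
  ring

lemma area2_add_underArea2 {ν τ : List Step} (h : WeaklyAbove τ ν) :
    area2 ν τ + underArea2 ν (eLen ν) = underArea2 τ (eLen ν) := by
  rw [area2, underArea2, underArea2, ← Finset.sum_add_distrib]
  exact Finset.sum_congr rfl fun x _ => Nat.sub_add_cancel (h x)

lemma area2_rightC {ν p q : List Step} (hπ : WeaklyAbove (p ++ Step.E :: Step.N :: q) ν)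
    (hσ : WeaklyAbove (p ++ Step.D :: q) ν) (hlen : eLen (p ++ Step.D :: q) = eLen ν) :
    area2 ν (p ++ Step.D :: q) = area2 ν (p ++ Step.E :: Step.N :: q) + 1 := by
  have hsum := underArea2_rightC p q (eLen q)
  have hπ' := area2_add_underArea2 hπ
  have hσ' := area2_add_underArea2 hσ
  simp only [eLen_append, eLen_cons_D] at hlen
  rw [← hlen] at hπ' hσ'
  omega

lemma area2_contract {ν p m t : List Step}
    (hπ : WeaklyAbove (p ++ Step.N :: (m ++ Step.E :: t)) ν)
    (hσ : WeaklyAbove (p ++ Step.D :: (m ++ t)) ν)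
    (hlen : eLen (p ++ Step.D :: (m ++ t)) = eLen ν) :
    area2 ν (p ++ Step.D :: (m ++ t)) + (2 * nLen m + 1)
      = area2 ν (p ++ Step.N :: (m ++ Step.E :: t)) := by
  have hsum := underArea2_contract p m t (eLen t)
  have hπ' := area2_add_underArea2 hπ
  have hσ' := area2_add_underArea2 hσ
  simp only [eLen_append, eLen_cons_D] at hlen
  rw [← hlen] at hπ' hσ'
  omega

theorem area_change_under_contraction_general (ν π σ : List Step)
    (hπ : IsSmallSchroder ν π) (hσ : IsSmallSchroder ν σ) :
    (RightC π σ → area2 ν σ = area2 ν π + 1) ∧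
    (LeftC ν π σ → area2 ν σ < area2 ν π) ∧
    (DiagC ν π σ → area2 ν σ < area2 ν π) ∧
    (Covers ν π σ → area2 ν σ = area2 ν π + 1 ∨ area2 ν σ < area2 ν π) := by
  have right : RightC π σ → area2 ν σ = area2 ν π + 1 := by
    rintro ⟨p, q, rfl, rfl⟩
    exact area2_rightC hπ.2.2 hσ.2.2 hσ.1
  have left : LeftC ν π σ → area2 ν σ < area2 ν π := by
    rintro ⟨p, m, q, rfl, rfl, -⟩
    have := area2_contract hπ.2.2 hσ.2.2 hσ.1
    omega
  have diag : DiagC ν π σ → area2 ν σ < area2 ν π := by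
    rintro ⟨p, m, q, rfl, rfl, -⟩
    have := area2_contract hπ.2.2 hσ.2.2 hσ.1
    omega
  refine ⟨right, left, diag, ?_⟩
  rintro ⟨-, -, h | h | h⟩
  exacts [.inl (right h), .inr (left h), .inr (diag h)]

/-- If a ν-Schröder path σ is obtained from π by a single contraction, then
a right contraction increases the area by exactly `1/2` while left and diagonal contractions
strictly decrease it (here `area2` is twice the area, so it changes by integer amounts); in
particular any single contraction either adds exactly `1/2` to the area or decreases it, so
the area is conserved along a sequence of contractions only if every contraction is a right
contraction. -/
theorem area_change_under_contraction (ν π σ : List Step) (hν : IsLatticePath ν)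
    (hπ : IsSmallSchroder ν π) (hσ : IsSmallSchroder ν σ) :
    (RightC π σ → area2 ν σ = area2 ν π + 1) ∧
    (LeftC ν π σ → area2 ν σ < area2 ν π) ∧
    (DiagC ν π σ → area2 ν σ < area2 ν π) ∧
    (Covers ν π σ → area2 ν σ = area2 ν π + 1 ∨ area2 ν σ < area2 ν π) :=
  area_change_under_contraction_general ν π σ hπ hσ
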